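/- arXiv:2211.06805 — 3 statements merged into one kernel-verified Lean document; each statement's English description precedes it below -/
import Mathlib

section
/- Let F(x1,x2) and F*(x1,x2) be the 4×4 matrices F = [[1,0,0,0],[0, b2(x2,x1), c1(x2,x1), 0],[0,0,1,0],[0,0,0,1]] and F* = [[a1(x1,x2),0,0,0],[0,1,c2(x1,x2),0],[0,0,b2(x1,x2),0],[0,0,0,a2(x1,x2)]], with the ΓΓ weights a1(z,z')=1, a2(z,z')=(z−vz')/(z'−vz), b2(z,z')=(z−z')/(z'−vz), c1(z,z')=(1−v)z/(z'−vz), c2(z,z')=(1−v)z'/(z'−vz). Then F·F* is the diagonal matrix diag(1, b2(x2,x1), b2(x1,x2), a2(x1,x2)), for all v, x1, x2 with x1 ≠ v·x2 and x2 ≠ v·x1. -/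
/-- For N = 2, the product of the F-matrix and the dual F-matrix built from the
free-fermionic ΓΓ R-matrix is the diagonal matrix
diag(1, b2(x2,x1), b2(x1,x2), a2(x1,x2)). -/
theorem F_mul_Fstar_eq_diagonal (v x1 x2 : ℂ) (h1 : x1 ≠ v * x2) (h2 : x2 ≠ v * x1) :
    (!![(1 : ℂ), 0, 0, 0;
        0, (x2 - x1) / (x1 - v * x2), (1 - v) * x2 / (x1 - v * x2), 0;
        0, 0, 1, 0;
        0, 0, 0, 1]) *
    (!![(1 : ℂ), 0, 0, 0;
        0, 1, (1 - v) * x2 / (x2 - v * x1), 0;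
        0, 0, (x1 - x2) / (x2 - v * x1), 0;
        0, 0, 0, (x1 - v * x2) / (x2 - v * x1)]) =
    Matrix.diagonal
      ![(1 : ℂ), (x2 - x1) / (x1 - v * x2), (x1 - x2) / (x2 - v * x1),
        (x1 - v * x2) / (x2 - v * x1)] := by
  have h1' : x1 - v * x2 ≠ 0 := sub_ne_zero.mpr h1
  have h2' : x2 - v * x1 ≠ 0 := sub_ne_zero.mpr h2
  ext i j
  fin_cases i <;> fin_cases j <;>
    simp [Matrix.mul_apply, Fin.sum_univ_succ, Matrix.diagonal] <;>
    field_simp <;> ring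
end

section
/- The ΓΓ R-matrix satisfies the Yang–Baxter equation: R₁₂(z₁,z₂)·R₁₃(z₁,z₃)·R₂₃(z₂,z₃) = R₂₃(z₂,z₃)·R₁₃(z₁,z₃)·R₁₂(z₁,z₂) as operators on ℂ²⊗ℂ²⊗ℂ², for all complex v and z₁, z₂, z₃ at which all entries are defined. -/
open Matrix

/-- The ΓΓ R-matrix on ℂ²⊗ℂ², entries indexed by pairs in Fin 2 × Fin 2
(ordered basis |00⟩,|01⟩,|10⟩,|11⟩). -/
noncomputable def RGG (v z z' : ℂ) : Matrix (Fin 2 × Fin 2) (Fin 2 × Fin 2) ℂ :=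
  fun p q =>
    if p = (0, 0) ∧ q = (0, 0) then 1
    else if p = (0, 1) ∧ q = (0, 1) then (z - z') / (z' - v * z)
    else if p = (0, 1) ∧ q = (1, 0) then (1 - v) * z / (z' - v * z)
    else if p = (1, 0) ∧ q = (0, 1) then (1 - v) * z' / (z' - v * z)
    else if p = (1, 0) ∧ q = (1, 0) then v * (z - z') / (z' - v * z)
    else if p = (1, 1) ∧ q = (1, 1) then (z - v * z') / (z' - v * z)
    else 0

/-- R acting on tensor factors 1 and 2 of ℂ²⊗ℂ²⊗ℂ². -/
noncomputable def R12 (v z z' : ℂ) :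
    Matrix (Fin 2 × Fin 2 × Fin 2) (Fin 2 × Fin 2 × Fin 2) ℂ :=
  fun p q => RGG v z z' (p.1, p.2.1) (q.1, q.2.1) * (if p.2.2 = q.2.2 then 1 else 0)

/-- R acting on tensor factors 1 and 3 of ℂ²⊗ℂ²⊗ℂ². -/
noncomputable def R13 (v z z' : ℂ) :
    Matrix (Fin 2 × Fin 2 × Fin 2) (Fin 2 × Fin 2 × Fin 2) ℂ :=
  fun p q => RGG v z z' (p.1, p.2.2) (q.1, q.2.2) * (if p.2.1 = q.2.1 then 1 else 0)

/-- R acting on tensor factors 2 and 3 of ℂ²⊗ℂ²⊗ℂ². -/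
noncomputable def R23 (v z z' : ℂ) :
    Matrix (Fin 2 × Fin 2 × Fin 2) (Fin 2 × Fin 2 × Fin 2) ℂ :=
  fun p q => RGG v z z' (p.2.1, p.2.2) (q.2.1, q.2.2) * (if p.1 = q.1 then 1 else 0)

/-! Clearing the common denominator `z' - v * z`, the ΓΓ R-matrix becomes a scalar multiple of a
matrix with polynomial entries. Scalars pass through both sides of the Yang–Baxter equation, so it
suffices to check the equation for the polynomial matrix, where it is an identity in `v, z₁, z₂, z₃`
verified entry by entry. -/

section Legs

variable {n α : Type*} [DecidableEq n] [Semiring α]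

def leg12 (A : Matrix (n × n) (n × n) α) : Matrix (n × n × n) (n × n × n) α :=
  fun p q => A (p.1, p.2.1) (q.1, q.2.1) * if p.2.2 = q.2.2 then 1 else 0

def leg13 (A : Matrix (n × n) (n × n) α) : Matrix (n × n × n) (n × n × n) α :=
  fun p q => A (p.1, p.2.2) (q.1, q.2.2) * if p.2.1 = q.2.1 then 1 else 0

def leg23 (A : Matrix (n × n) (n × n) α) : Matrix (n × n × n) (n × n × n) α :=
  fun p q => A (p.2.1, p.2.2) (q.2.1, q.2.2) * if p.1 = q.1 then 1 else 0

theorem leg12_smul (c : α) (A : Matrix (n × n) (n × n) α) : leg12 (c • A) = c • leg12 A := by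
  ext p q
  simp [leg12]

theorem leg13_smul (c : α) (A : Matrix (n × n) (n × n) α) : leg13 (c • A) = c • leg13 A := by
  ext p q
  simp [leg13]

theorem leg23_smul (c : α) (A : Matrix (n × n) (n × n) α) : leg23 (c • A) = c • leg23 A := by
  ext p q
  simp [leg23]

end Legs

theorem yangBaxter_smul {n α : Type*} [Fintype n] [DecidableEq n] [CommSemiring α]
    {A B C : Matrix (n × n) (n × n) α} (a b c : α)
    (h : leg12 A * leg13 B * leg23 C = leg23 C * leg13 B * leg12 A) :
    leg12 (a • A) * leg13 (b • B) * leg23 (c • C) =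
      leg23 (c • C) * leg13 (b • B) * leg12 (a • A) := by
  simp only [leg12_smul, leg13_smul, leg23_smul, Matrix.smul_mul, Matrix.mul_smul, smul_smul, h]
  congr 1
  ring

def rggNumerator {R : Type*} [CommRing R] (v z z' : R) : Matrix (Fin 2 × Fin 2) (Fin 2 × Fin 2) R
  | (0, 0), (0, 0) => z' - v * z
  | (0, 1), (0, 1) => z - z'
  | (0, 1), (1, 0) => (1 - v) * z
  | (1, 0), (0, 1) => (1 - v) * z'
  | (1, 0), (1, 0) => v * (z - z')
  | (1, 1), (1, 1) => z - v * z'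
  | _, _ => 0

theorem RGG_eq_smul_rggNumerator {v z z' : ℂ} (h : z' - v * z ≠ 0) :
    RGG v z z' = (z' - v * z)⁻¹ • rggNumerator v z z' := by
  ext ⟨a, b⟩ ⟨c, d⟩
  revert a b c d
  simp only [Fin.forall_fin_two, RGG, rggNumerator, Matrix.smul_apply, smul_eq_mul]
  simp [h, div_eq_inv_mul]

theorem rggNumerator_yangBaxter {R : Type*} [CommRing R] (v z₁ z₂ z₃ : R) :
    leg12 (rggNumerator v z₁ z₂) * leg13 (rggNumerator v z₁ z₃) * leg23 (rggNumerator v z₂ z₃) =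
      leg23 (rggNumerator v z₂ z₃) * leg13 (rggNumerator v z₁ z₃) *
        leg12 (rggNumerator v z₁ z₂) := by
  ext ⟨a, b, c⟩ ⟨d, e, f⟩
  revert a b c d e f
  simp only [Fin.forall_fin_two, Matrix.mul_apply, Fintype.sum_prod_type, Fin.sum_univ_two,
    leg12, leg13, leg23, rggNumerator, Fin.isValue, if_true, if_false, one_ne_zero, zero_ne_one,
    mul_one, mul_zero, add_zero, zero_add, zero_mul]
  repeat' constructor
  all_goals ring

/-- Yang–Baxter equation for the ΓΓ R-matrix. -/
theorem gamma_gamma_yang_baxter (v z₁ z₂ z₃ : ℂ)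
    (h12 : z₂ - v * z₁ ≠ 0) (h13 : z₃ - v * z₁ ≠ 0) (h23 : z₃ - v * z₂ ≠ 0) :
    R12 v z₁ z₂ * R13 v z₁ z₃ * R23 v z₂ z₃ =
      R23 v z₂ z₃ * R13 v z₁ z₃ * R12 v z₁ z₂ := by
  change leg12 (RGG v z₁ z₂) * leg13 (RGG v z₁ z₃) * leg23 (RGG v z₂ z₃) =
    leg23 (RGG v z₂ z₃) * leg13 (RGG v z₁ z₃) * leg12 (RGG v z₁ z₂)
  rw [RGG_eq_smul_rggNumerator h12, RGG_eq_smul_rggNumerator h13, RGG_eq_smul_rggNumerator h23]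
  exact yangBaxter_smul _ _ _ (rggNumerator_yangBaxter v z₁ z₂ z₃)
end

section
/- For a partition λ = (λ₁ ≥ … ≥ λ_N ≥ 0) and complex numbers v, z₁,…,z_N with z_i ≠ z_j and z_j ≠ v·z_i for i ≠ j: ∑_{σ∈S_N} ∏_{i=1}^N z_{σ(i)}^{λ_i+N−i} · ∏_{i<j, σ(i)>σ(j)} (z_{σ(i)}−v·z_{σ(j)})/(z_{σ(j)}−v·z_{σ(i)}) · ∏_{1≤i<j≤N} (z_{σ(j)}−v·z_{σ(i)})/(z_{σ(i)}−z_{σ(j)}) = ∏_{1≤i<j≤N}(z_j − v·z_i) · s_λ(z₁,…,z_N), where s_λ is the Schur polynomial. -/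
/-! For a pair `i < j`, the inversion factor (present when `σ` inverts the pair) times
`(z_{σ j} − v z_{σ i}) / (z_{σ i} − z_{σ j})` equals `w (σ i) (σ j)`, where
`w a b = (z_{max a b} − v z_{min a b}) / (z_a − z_b)` is antisymmetric. Hence the product over
all pairs is `sign σ · ∏_{i<j} w i j = sign σ · ∏ (z_j − v z_i) / ∏ (z_i − z_j)`. What remains,
`∑ sign σ ∏ z_{σ i}^{λ_i + N − 1 − i}`, is the numerator of the bialternant, and its denominator
is the Vandermonde product `∏_{i<j} (z_i − z_j)`. -/

open Finset

lemma prod_filter_fst_lt_snd_eq_prod_prod_Ioi {M : Type*} [CommMonoid M] {n : ℕ}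
    (f : Fin n → Fin n → M) :
    ∏ p ∈ univ.filter (fun p : Fin n × Fin n => p.1 < p.2), f p.1 p.2 =
      ∏ i, ∏ j ∈ Ioi i, f i j :=
  prod_finset_product _ _ _ (by simp)

lemma det_of_pow_rev_eq_prod_prod_Ioi {R : Type*} [CommRing R] {n : ℕ} (z : Fin n → R) :
    (Matrix.of fun i j : Fin n => z i ^ (n - 1 - (j : ℕ))).det =
      ∏ i, ∏ j ∈ Ioi i, (z i - z j) := by
  have hproj : (Matrix.of fun i j : Fin n => z i ^ (n - 1 - (j : ℕ))) =
      Matrix.projVandermonde 1 z := by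
    ext i j
    rw [Matrix.of_apply, Matrix.projVandermonde_apply, Pi.one_apply, one_pow, one_mul,
      Fin.val_rev]
    congr 1
    omega
  simp [hproj, Matrix.det_projVandermonde]

section PairWeight

variable {K : Type*} [Field K] {n : ℕ} (v : K) (z : Fin n → K)

/-- Antisymmetric in `a`, `b` (at `a = b` thanks to `x / 0 = 0`). -/
def pairWeight (a b : Fin n) : K :=
  (z (max a b) - v * z (min a b)) / (z a - z b)

lemma pairWeight_swap (a b : Fin n) : pairWeight v z b a = -pairWeight v z a b := by
  rw [pairWeight, pairWeight, max_comm, min_comm, ← neg_sub (z a), div_neg]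

lemma prod_pairWeight_comp_perm (σ : Equiv.Perm (Fin n)) :
    ∏ i, ∏ j ∈ Ioi i, pairWeight v z (σ i) (σ j) =
      σ.sign * ∏ i, ∏ j ∈ Ioi i, pairWeight v z i j :=
  σ.prod_Ioi_comp_eq_sign_mul_prod fun i j => pairWeight_swap v z j i

lemma prod_pairWeight :
    ∏ i, ∏ j ∈ Ioi i, pairWeight v z i j =
      (∏ i, ∏ j ∈ Ioi i, (z j - v * z i)) / ∏ i, ∏ j ∈ Ioi i, (z i - z j) := by
  simp only [← prod_div_distrib]
  refine prod_congr rfl fun i _ => prod_congr rfl fun j hj => ?_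
  have hij : i ≤ j := (mem_Ioi.1 hj).le
  rw [pairWeight, max_eq_right hij, min_eq_left hij]

lemma inversionFactor_mul_eq_pairWeight {a b : Fin n} (hab : z b ≠ v * z a) :
    (if b < a then (z a - v * z b) / (z b - v * z a) else 1) *
        ((z b - v * z a) / (z a - z b)) = pairWeight v z a b := by
  rw [pairWeight]
  split_ifs with hba
  · rw [max_eq_left hba.le, min_eq_right hba.le, div_mul_div_cancel₀ (sub_ne_zero.2 hab)]
  · rw [one_mul, max_eq_right (not_lt.1 hba), min_eq_left (not_lt.1 hba)]

lemma prod_inversions_mul_prod_pairs (hvz : ∀ i j : Fin n, i ≠ j → z j ≠ v * z i)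
    (σ : Equiv.Perm (Fin n)) :
    (∏ p ∈ univ.filter (fun p : Fin n × Fin n => p.1 < p.2 ∧ σ p.2 < σ p.1),
        (z (σ p.1) - v * z (σ p.2)) / (z (σ p.2) - v * z (σ p.1))) *
      (∏ p ∈ univ.filter (fun p : Fin n × Fin n => p.1 < p.2),
        (z (σ p.2) - v * z (σ p.1)) / (z (σ p.1) - z (σ p.2))) =
      σ.sign * ∏ i, ∏ j ∈ Ioi i, pairWeight v z i j := by
  rw [← filter_filter, prod_filter, ← prod_mul_distrib,
    prod_filter_fst_lt_snd_eq_prod_prod_Ioi fun a b =>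
      (if σ b < σ a then (z (σ a) - v * z (σ b)) / (z (σ b) - v * z (σ a)) else 1) *
        ((z (σ b) - v * z (σ a)) / (z (σ a) - z (σ b))),
    ← prod_pairWeight_comp_perm]
  exact prod_congr rfl fun i _ => prod_congr rfl fun j hj =>
    inversionFactor_mul_eq_pairWeight v z (hvz _ _ (σ.injective.ne (mem_Ioi.1 hj).ne))

end PairWeight

theorem tokuyama_partition_function_general (N : ℕ) (lam : Fin N → ℕ)
    (v : ℂ) (z : Fin N → ℂ)
    (hvz : ∀ i j : Fin N, i ≠ j → z j ≠ v * z i) :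
    ∑ σ : Equiv.Perm (Fin N),
      ((∏ i : Fin N, z (σ i) ^ (lam i + (N - 1 - (i : ℕ)))) *
        (∏ p ∈ Finset.univ.filter (fun p : Fin N × Fin N => p.1 < p.2 ∧ σ p.2 < σ p.1),
          (z (σ p.1) - v * z (σ p.2)) / (z (σ p.2) - v * z (σ p.1))) *
        (∏ p ∈ Finset.univ.filter (fun p : Fin N × Fin N => p.1 < p.2),
          (z (σ p.2) - v * z (σ p.1)) / (z (σ p.1) - z (σ p.2)))) =
    (∏ p ∈ Finset.univ.filter (fun p : Fin N × Fin N => p.1 < p.2), (z p.2 - v * z p.1)) *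
      ((Matrix.of fun i j : Fin N => z i ^ (lam j + (N - 1 - (j : ℕ)))).det /
        (Matrix.of fun i j : Fin N => z i ^ (N - 1 - (j : ℕ))).det) := by
  simp only [mul_assoc, prod_inversions_mul_prod_pairs v z hvz]
  rw [prod_pairWeight, det_of_pow_rev_eq_prod_prod_Ioi, Matrix.det_apply',
    prod_filter_fst_lt_snd_eq_prod_prod_Ioi fun i j => z j - v * z i, ← mul_div_assoc,
    mul_comm, mul_div_assoc, sum_mul]
  exact sum_congr rfl fun σ _ => by simp only [Matrix.of_apply]; ring

/-- Tokuyama-type evaluation of the free-fermionic six-vertex partition function,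
with the Schur polynomial given by the bialternant formula. -/
theorem tokuyama_partition_function (N : ℕ) (hN : 0 < N) (lam : Fin N → ℕ)
    (hlam : Antitone lam) (v : ℂ) (z : Fin N → ℂ)
    (hzz : ∀ i j : Fin N, i ≠ j → z i ≠ z j)
    (hvz : ∀ i j : Fin N, i ≠ j → z j ≠ v * z i) :
    ∑ σ : Equiv.Perm (Fin N),
      ((∏ i : Fin N, z (σ i) ^ (lam i + (N - 1 - (i : ℕ)))) *
        (∏ p ∈ Finset.univ.filter (fun p : Fin N × Fin N => p.1 < p.2 ∧ σ p.2 < σ p.1),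
          (z (σ p.1) - v * z (σ p.2)) / (z (σ p.2) - v * z (σ p.1))) *
        (∏ p ∈ Finset.univ.filter (fun p : Fin N × Fin N => p.1 < p.2),
          (z (σ p.2) - v * z (σ p.1)) / (z (σ p.1) - z (σ p.2)))) =
    (∏ p ∈ Finset.univ.filter (fun p : Fin N × Fin N => p.1 < p.2), (z p.2 - v * z p.1)) *
      ((Matrix.of fun i j : Fin N => z i ^ (lam j + (N - 1 - (j : ℕ)))).det /
        (Matrix.of fun i j : Fin N => z i ^ (N - 1 - (j : ℕ))).det) :=
  tokuyama_partition_function_general N lam v z hvz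
end
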